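/- arXiv:1402.4424 — 3 statements merged into one kernel-verified Lean document; each statement's English description precedes it below -/
import Mathlib

section
/- Let b be a prime, n,d ≥ 1 and s ≥ n integers, and let P be the digital net over 𝔽_b generated by matrices C₁,…,C_d ∈ 𝔽_b^{s×n}. Then for every x ∈ [0,1)^d the discrepancy function satisfies D_P(x) = Σ_{t ∈ 𝒟(C₁,…,C_d) \ {(0,…,0)}} χ̂_{[0,x)}(t), where the sum converges in the sense that lim_{M→∞} Σ_{t ∈ 𝒟(C₁,…,C_d) \ {(0,…,0)}, t_i < b^M for all i} χ̂_{[0,x)}(t) = D_P(x). -/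
open MeasureTheory Finset
open scoped BigOperators Classical

noncomputable section

namespace DigitalNets

/-- The `b`-adic digit vector `ν̄ = (ν₀,…,ν_{n−1})ᵀ ∈ 𝔽_b^n` of `ν ∈ ℕ`. -/
def digitVec (b n : ℕ) (ν : ℕ) : Fin n → ZMod b :=
  fun k => ((ν / b ^ (k : ℕ)) % b : ℕ)

/-- The point of the digital net with index `ν`:
`x_{i,ν} = Σ_{k=1}^s x_{i,ν,k} b^{−k}` where `(x_{i,ν,1},…,x_{i,ν,s})ᵀ = C_i ν̄`. -/
def digitalPoint {b n s d : ℕ} (Cm : Fin d → Matrix (Fin s) (Fin n) (ZMod b)) (ν : ℕ) :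
    Fin d → ℝ :=
  fun i => ∑ k : Fin s,
    (((Matrix.mulVec (Cm i) (digitVec b n ν)) k).val : ℝ) * ((b : ℝ) ^ ((k : ℕ) + 1))⁻¹

/-- The digital net over `𝔽_b` generated by `C₁,…,C_d`, as the indexed family (multiset)
of its `b^n` points `x₀,…,x_{b^n−1}`. -/
def digitalNet {b n s d : ℕ} (Cm : Fin d → Matrix (Fin s) (Fin n) (ZMod b)) :
    Fin (b ^ n) → Fin d → ℝ :=
  fun ν => digitalPoint Cm (ν : ℕ)

/-- `C₁,…,C_d` generate an order `σ` digital `(v,n,d)`-net over `𝔽_b`: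
for all `η₁,…,η_d ∈ ℕ₀` and all `1 ≤ λ_{i,1} < … < λ_{i,η_i} ≤ s` with
`Σᵢ (λ_{i,1}+…+λ_{i,min(η_i,σ)}) ≤ σn − v`, the rows `c_{i,λ_{i,k}}` are linearly
independent over `𝔽_b`.  (Here `lam i k : Fin s` encodes the index `λ_{i,k+1} = lam i k + 1`.) -/
def IsOrderDigitalNet (b σ n d s v : ℕ) (Cm : Fin d → Matrix (Fin s) (Fin n) (ZMod b)) : Prop :=
  ∀ (η : Fin d → ℕ) (lam : (i : Fin d) → Fin (η i) → Fin s),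
    (∀ i, StrictMono (lam i)) →
    (∑ i, ∑ k : Fin (η i), if (k : ℕ) < σ then (lam i k : ℕ) + 1 else 0) ≤ σ * n - v →
    LinearIndependent (ZMod b)
      (fun p : (i : Fin d) × Fin (η i) => fun jc : Fin n => Cm p.1 (lam p.1 p.2) jc)

/-- The unit cube `[0,1)^d`. -/
def unitCube (d : ℕ) : Set (Fin d → ℝ) := Set.univ.pi fun _ => Set.Ico (0 : ℝ) 1

/-- The discrepancy function `D_P(x) = (1/N) Σ_{z∈P} χ_{[0,x)}(z) − x₁⋯x_d` of a
point multiset `P` given as an indexed family of `N` points. -/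
def discrepancy (d N : ℕ) (P : Fin N → Fin d → ℝ) (x : Fin d → ℝ) : ℝ :=
  ((Finset.univ.filter fun ν : Fin N =>
      P ν ∈ Set.univ.pi fun i => Set.Ico (0 : ℝ) (x i)).card : ℝ) / (N : ℝ) - ∏ i, x i

/-- One-dimensional `b`-adic Haar function `h_{j,m,l}` (level `j ∈ ℕ₋₁`, encoded as `j : ℤ`). -/
def haar1 (b : ℕ) (j : ℤ) (m l : ℕ) (x : ℝ) : ℂ :=
  if j = -1 then (if x ∈ Set.Ico (0 : ℝ) 1 then 1 else 0)
  else if x ∈ Set.Ico ((b : ℝ) ^ (-j) * (m : ℝ)) ((b : ℝ) ^ (-j) * ((m : ℝ) + 1)) then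
    Complex.exp (2 * (Real.pi : ℂ) * Complex.I * (l : ℂ) *
      ((⌊(b : ℝ) ^ (j + 1) * x⌋ % (b : ℤ) : ℤ) : ℂ) / (b : ℂ))
  else 0

/-- `d`-dimensional `b`-adic Haar function `h_{j,m,l}(x) = ∏ᵢ h_{jᵢ,mᵢ,lᵢ}(xᵢ)`. -/
def haar (b d : ℕ) (j : Fin d → ℤ) (m l : Fin d → ℕ) (x : Fin d → ℝ) : ℂ :=
  ∏ i, haar1 b (j i) (m i) (l i) (x i)

/-- Encoding of levels: `jr : Fin d → ℕ` encodes `j ∈ ℕ₋₁^d` via `j i = jr i − 1`. -/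
def level {d : ℕ} (jr : Fin d → ℕ) : Fin d → ℤ := fun i => (jr i : ℤ) - 1

/-- `|j|₊ = Σᵢ max(jᵢ,0)` for the level encoded by `jr`. -/
def levelSum {d : ℕ} (jr : Fin d → ℕ) : ℕ := ∑ i, (jr i - 1)

/-- `l ∈ 𝔹_j`: `l i = 1` if `j i = −1` (i.e. `jr i = 0`), and `1 ≤ l i ≤ b−1` otherwise. -/
def validL (b : ℕ) {d : ℕ} (jr : Fin d → ℕ) (l : Fin d → ℕ) : Prop :=
  ∀ i, if jr i = 0 then l i = 1 else 1 ≤ l i ∧ l i < b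

/-- Inner product `⟨f,g⟩ = ∫_{[0,1)^d} f(x) conj(g(x)) dx`. -/
def innerCube (d : ℕ) (f g : (Fin d → ℝ) → ℂ) : ℂ :=
  ∫ x in unitCube d, f x * (starRingEnd ℂ) (g x)

/-- One-dimensional `b`-adic interval `I_{j,m}` (level `j ∈ ℕ₋₁` encoded as `j : ℤ`). -/
def badicInterval1 (b : ℕ) (j : ℤ) (m : ℕ) : Set ℝ :=
  if j = -1 then Set.Ico 0 1
  else Set.Ico ((b : ℝ) ^ (-j) * (m : ℝ)) ((b : ℝ) ^ (-j) * ((m : ℝ) + 1))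

/-- `d`-dimensional `b`-adic interval `I_{j,m} = I_{j₁,m₁}×…×I_{j_d,m_d}`. -/
def badicInterval (b : ℕ) {d : ℕ} (j : Fin d → ℤ) (m : Fin d → ℕ) : Set (Fin d → ℝ) :=
  Set.univ.pi fun i => badicInterval1 b (j i) (m i)

/-- The `a`-th `b`-adic digit of `x ∈ [0,1)` (`a = 0` gives the first digit `x₁`),
for the expansion not ending in an infinite string of digits `b−1`. -/
def xdigit (b : ℕ) (a : ℕ) (x : ℝ) : ℤ := ⌊(b : ℝ) ^ (a + 1) * x⌋ % (b : ℤ)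

/-- One-dimensional `b`-adic Walsh function `wal_α`. -/
def walsh1 (b : ℕ) (α : ℕ) (x : ℝ) : ℂ :=
  Complex.exp (2 * (Real.pi : ℂ) * Complex.I / (b : ℂ) *
    ∑ a ∈ Finset.range (α + 1), (((α / b ^ a) % b : ℕ) : ℂ) * ((xdigit b a x : ℤ) : ℂ))

/-- `d`-dimensional Walsh function `wal_t(x) = ∏ᵢ wal_{tᵢ}(xᵢ)`. -/
def walsh (b d : ℕ) (t : Fin d → ℕ) (x : Fin d → ℝ) : ℂ := ∏ i, walsh1 b (t i) (x i)

/-- The vector `t̄ = (τ₀,…,τ_{s−1})ᵀ ∈ 𝔽_b^s` of the first `s` `b`-adic digits of `t`. -/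
def dualDigitVec (b s : ℕ) (t : ℕ) : Fin s → ZMod b :=
  fun k => ((t / b ^ (k : ℕ)) % b : ℕ)

/-- The dual net: `t ∈ 𝒟(C₁,…,C_d)` iff `C₁ᵀt̄₁ + … + C_dᵀt̄_d = 0 ∈ 𝔽_b^n`. -/
def InDual {b n s d : ℕ} (Cm : Fin d → Matrix (Fin s) (Fin n) (ZMod b)) (t : Fin d → ℕ) : Prop :=
  ∑ i, Matrix.mulVec (Matrix.transpose (Cm i)) (dualDigitVec b s (t i)) = 0

/-- The positions `0 < a₁ < … < a_ν` of the nonzero `b`-adic digits of `α`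
(`a` is a position iff the digit of `b^{a−1}` in `α` is nonzero). -/
def digitPositions (b α : ℕ) : Finset ℕ :=
  (Finset.range (α + 1)).filter fun a => 1 ≤ a ∧ (α / b ^ (a - 1)) % b ≠ 0

/-- The weight `ρ_σ(α) = a_ν + a_{ν−1} + … + a_{max(ν−σ+1,1)}`: the sum of the `σ`
largest positions of nonzero `b`-adic digits of `α`; `ρ_σ(0) = 0`. -/
def weight (b σ α : ℕ) : ℕ :=
  ∑ a ∈ digitPositions b α,
    if ((digitPositions b α).filter fun a' => a < a').card < σ then a else 0

/-- `ρ_σ(t) = ρ_σ(t₁) + … + ρ_σ(t_d)` for `t ∈ ℕ₀^d`. -/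
def weightVec (b σ : ℕ) {d : ℕ} (t : Fin d → ℕ) : ℕ := ∑ i, weight b σ (t i)

/-- `t′`: the number `t` with its leading `b`-adic digit removed; `0′ = 0`. -/
def trunc (b t : ℕ) : ℕ := t % b ^ (weight b 1 t - 1)

/-- Walsh coefficient `χ̂_{[0,x)}(η) = ∫₀^x conj(wal_η(y)) dy` of the indicator of `[0,x)`. -/
def walshCoeff (b : ℕ) (η : ℕ) (x : ℝ) : ℂ :=
  ∫ y in Set.Ico (0 : ℝ) x, (starRingEnd ℂ) (walsh1 b η y)

end DigitalNets

/-!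
On the digital net, `wal_t(x_ν)` is the additive character `ν̄ ↦ e_b((Σᵢ Cᵢᵀ t̄ᵢ) · ν̄)` of
`𝔽_b^n`, so averaging it over the `b^n` points gives `1` on the dual net and `0` off it. Hence the
truncated sum over the dual net equals `b^{-n} Σ_ν ∏ᵢ Σ_{η < b^M} χ̂_{[0,xᵢ)}(η) wal_η(x_{ν,i})`,
and the `t = 0` term is `x₁⋯x_d`. The inner sum is the integral over `[0,xᵢ)` of the Walsh–Dirichlet
kernel `Σ_{η < b^M} conj(wal_η(u)) wal_η(y) = b^M · 1[⌊b^M u⌋ = ⌊b^M y⌋]`. Since `x_{ν,i}` has only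
`s` digits, this integral is exactly `1[x_{ν,i} < xᵢ]` as soon as `M ≥ s` and `b^{-M}` is below
every positive gap `xᵢ - x_{ν,i}`, so the partial sums are eventually equal to `D_P(x)`.
-/

theorem AddChar.map_sum_eq_prod {A M ι : Type*} [AddCommMonoid A] [CommMonoid M]
    (ψ : AddChar A M) (s : Finset ι) (f : ι → A) : ψ (∑ i ∈ s, f i) = ∏ i ∈ s, ψ (f i) := by
  induction s using Finset.cons_induction with
  | empty => simp
  | cons a s ha ih => rw [Finset.sum_cons, Finset.prod_cons, AddChar.map_add_eq_mul, ih]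

namespace ZMod

theorem finEquiv_apply {b : ℕ} [NeZero b] (k : Fin b) : finEquiv b k = (k : ℕ) := by
  obtain ⟨c, rfl⟩ := Nat.exists_eq_succ_of_ne_zero (NeZero.ne b)
  exact (Fin.cast_val_eq_self k).symm

theorem val_finEquiv_symm {b : ℕ} [NeZero b] (z : ZMod b) : ((finEquiv b).symm z : ℕ) = z.val := by
  conv_rhs => rw [← (finEquiv b).apply_symm_apply z, finEquiv_apply]
  exact (val_cast_of_lt (Fin.isLt _)).symm

theorem sum_stdAddChar_dotProduct {p : ℕ} [Fact p.Prime] {ι : Type*} [Fintype ι] [DecidableEq ι]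
    (v : ι → ZMod p) :
    ∑ w : ι → ZMod p, stdAddChar (v ⬝ᵥ w) = if v = 0 then (p : ℂ) ^ Fintype.card ι else 0 := by
  simp_rw [dotProduct, AddChar.map_sum_eq_prod]
  rw [← Fintype.prod_sum fun i u => stdAddChar (v i * u)]
  simp_rw [mul_comm (v _), AddChar.sum_mulShift _ (isPrimitive_stdAddChar p), card]
  push_cast
  rw [Finset.prod_ite_zero]
  simp [funext_iff]

end ZMod

namespace DigitalNets

open Matrix

section Digits

variable {b : ℕ}

def digitEquiv (b M : ℕ) [NeZero b] : Fin (b ^ M) ≃ (Fin M → ZMod b) :=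
  finFunctionFinEquiv.symm.trans (Equiv.arrowCongr (Equiv.refl _) (ZMod.finEquiv b).toEquiv)

theorem digitEquiv_apply [NeZero b] {M : ℕ} (η : Fin (b ^ M)) :
    digitEquiv b M η = dualDigitVec b M η := by
  funext a
  simp [digitEquiv, ZMod.finEquiv_apply, dualDigitVec]

theorem val_digitEquiv_symm [NeZero b] {M : ℕ} (g : Fin M → ZMod b) :
    ((digitEquiv b M).symm g : ℕ) = ∑ j, (g j).val * b ^ (j : ℕ) := by
  simp [digitEquiv, ZMod.val_finEquiv_symm]

/-- `a ↦ u_{a+1}`, the first `M` digits of the `b`-adic expansion of `u ≥ 0`; the cast to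
`ZMod b` does the reduction mod `b`. -/
def realDigitVec (b M : ℕ) (u : ℝ) : Fin M → ZMod b :=
  fun a => (⌊(b : ℝ) ^ ((a : ℕ) + 1) * u⌋₊ : ℕ)

theorem natFloor_pow_succ_mul {a M : ℕ} (ha : a < M) (u : ℝ) :
    ⌊(b : ℝ) ^ (a + 1) * u⌋₊ = ⌊(b : ℝ) ^ M * u⌋₊ / b ^ (M - 1 - a) := by
  rcases Nat.eq_zero_or_pos b with rfl | hb
  · simp [show M ≠ 0 by omega]
  have hpow : (b : ℝ) ^ M = (b : ℝ) ^ (a + 1) * (b : ℝ) ^ (M - 1 - a) := by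
    rw [← pow_add]; congr 1; omega
  rw [← Nat.floor_div_natCast, hpow]
  push_cast
  field_simp

theorem realDigitVec_eq_comp_rev {M : ℕ} (u : ℝ) :
    realDigitVec b M u = dualDigitVec b M ⌊(b : ℝ) ^ M * u⌋₊ ∘ Fin.rev := by
  funext a
  simp only [realDigitVec, dualDigitVec, Function.comp_apply, Fin.val_rev, ZMod.natCast_mod,
    natFloor_pow_succ_mul a.isLt]
  congr 3
  omega

theorem natFloor_pow_mul_lt [NeZero b] {M : ℕ} {u : ℝ} (hu0 : 0 ≤ u) (hu1 : u < 1) :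
    ⌊(b : ℝ) ^ M * u⌋₊ < b ^ M := by
  have hbM : (0 : ℝ) < (b : ℝ) ^ M := by have := NeZero.pos b; positivity
  rw [Nat.floor_lt (by positivity)]
  push_cast
  nlinarith

theorem realDigitVec_eq_iff [NeZero b] {M : ℕ} {u y : ℝ} (hu0 : 0 ≤ u) (hu1 : u < 1)
    (hy0 : 0 ≤ y) (hy1 : y < 1) :
    realDigitVec b M u = realDigitVec b M y ↔ ⌊(b : ℝ) ^ M * u⌋₊ = ⌊(b : ℝ) ^ M * y⌋₊ := by
  rw [realDigitVec_eq_comp_rev, realDigitVec_eq_comp_rev,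
    Fin.rev_surjective.injective_comp_right.eq_iff]
  have := (digitEquiv b M).injective.eq_iff (a := ⟨_, natFloor_pow_mul_lt hu0 hu1⟩)
    (b := ⟨_, natFloor_pow_mul_lt hy0 hy1⟩)
  simpa only [digitEquiv_apply, Fin.ext_iff] using this

end Digits

section Walsh

variable {b : ℕ}

theorem walsh1_eq_stdAddChar [NeZero b] (η : ℕ) (u : ℝ) :
    walsh1 b η u = ZMod.stdAddChar
      (((∑ a ∈ range (η + 1), ((η / b ^ a % b : ℕ) : ℤ) * xdigit b a u : ℤ)) : ZMod b) := by
  rw [ZMod.stdAddChar_coe, walsh1]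
  congr 1
  simp only [Int.cast_sum, Int.cast_mul, Int.cast_natCast]
  ring

theorem norm_walsh1 [NeZero b] (η : ℕ) (u : ℝ) : ‖walsh1 b η u‖ = 1 := by
  rw [walsh1_eq_stdAddChar]
  exact AddChar.norm_apply _ _

theorem walsh1_eq_stdAddChar_dotProduct [Fact (1 < b)] {η N : ℕ} {u : ℝ} (hu : 0 ≤ u)
    (h : ∀ a, N ≤ a → ((η / b ^ a % b : ℕ) : ZMod b) * (⌊(b : ℝ) ^ (a + 1) * u⌋₊ : ℕ) = 0) :
    walsh1 b η u = ZMod.stdAddChar (dualDigitVec b N η ⬝ᵥ realDigitVec b N u) := by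
  set f : ℕ → ZMod b := fun a => ((η / b ^ a % b : ℕ) : ZMod b) * (⌊(b : ℝ) ^ (a + 1) * u⌋₊ : ℕ)
  have hxdigit (a : ℕ) : ((xdigit b a u : ℤ) : ZMod b) = (⌊(b : ℝ) ^ (a + 1) * u⌋₊ : ℕ) := by
    rw [xdigit, ZMod.intCast_mod, ← Int.natCast_floor_eq_floor (by positivity), Int.cast_natCast]
  have hdigit (a : ℕ) (ha : η + 1 ≤ a) : f a = 0 := by
    have : η < b ^ a :=
      (Nat.lt_pow_self Fact.out).trans_le (Nat.pow_le_pow_right (NeZero.pos b) (by omega))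
    simp [f, Nat.div_eq_of_lt this]
  rw [walsh1_eq_stdAddChar]
  congr 1
  simp only [Int.cast_sum, Int.cast_mul, Int.cast_natCast, hxdigit]
  calc ∑ a ∈ range (η + 1), f a = ∑ a ∈ range (max (η + 1) N), f a :=
        Finset.sum_subset (range_subset_range.mpr (le_max_left _ _)) fun a _ ha =>
          hdigit a (by simpa using ha)
    _ = ∑ a ∈ range N, f a :=
        (Finset.sum_subset (range_subset_range.mpr (le_max_right _ _)) fun a _ ha =>
          h a (by simpa using ha)).symm
    _ = _ := Finset.sum_range f

theorem sum_conj_walsh1_mul_walsh1 [Fact b.Prime] (M : ℕ) {u y : ℝ} (hu0 : 0 ≤ u)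
    (hu1 : u < 1) (hy0 : 0 ≤ y) (hy1 : y < 1) :
    ∑ η ∈ range (b ^ M), starRingEnd ℂ (walsh1 b η u) * walsh1 b η y
      = if ⌊(b : ℝ) ^ M * u⌋₊ = ⌊(b : ℝ) ^ M * y⌋₊ then (b : ℂ) ^ M else 0 := by
  have hwalsh (η : Fin (b ^ M)) {v : ℝ} (hv : 0 ≤ v) :
      walsh1 b η v = ZMod.stdAddChar (digitEquiv b M η ⬝ᵥ realDigitVec b M v) := by
    rw [digitEquiv_apply]
    refine walsh1_eq_stdAddChar_dotProduct hv fun a ha => ?_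
    rw [Nat.div_eq_of_lt (η.isLt.trans_le (Nat.pow_le_pow_right (NeZero.pos b) ha))]
    simp
  set δ := realDigitVec b M y - realDigitVec b M u
  calc ∑ η ∈ range (b ^ M), starRingEnd ℂ (walsh1 b η u) * walsh1 b η y
      = ∑ η : Fin (b ^ M), ZMod.stdAddChar (digitEquiv b M η ⬝ᵥ δ) := by
        rw [Finset.sum_range]
        refine Finset.sum_congr rfl fun η _ => ?_
        rw [hwalsh η hu0, hwalsh η hy0, ← AddChar.map_neg_eq_conj, ← AddChar.map_add_eq_mul,
          dotProduct_sub, neg_add_eq_sub]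
    _ = ∑ g, ZMod.stdAddChar (δ ⬝ᵥ g) := by
        simp_rw [dotProduct_comm _ δ]
        exact (digitEquiv b M).sum_comp fun g => ZMod.stdAddChar (δ ⬝ᵥ g)
    _ = _ := by
        rw [ZMod.sum_stdAddChar_dotProduct, Fintype.card_fin]
        simp only [δ, sub_eq_zero, eq_comm (a := realDigitVec b M y),
          realDigitVec_eq_iff hu0 hu1 hy0 hy1]

end Walsh

section WalshCoefficients

variable {b : ℕ}

theorem measurable_walsh1 (η : ℕ) : Measurable (walsh1 b η) := by
  unfold walsh1 xdigit
  fun_prop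

theorem integrableOn_conj_walsh1_mul [NeZero b] (η : ℕ) (c : ℂ) (x : ℝ) :
    IntegrableOn (fun u => starRingEnd ℂ (walsh1 b η u) * c) (Set.Ico 0 x) := by
  have : IsFiniteMeasure (volume.restrict (Set.Ico (0 : ℝ) x)) := by
    rw [isFiniteMeasure_restrict]
    exact measure_Ico_lt_top.ne
  have hmeas : Measurable fun u => starRingEnd ℂ (walsh1 b η u) * c :=
    (Complex.continuous_conj.measurable.comp (measurable_walsh1 η)).mul_const c
  refine Integrable.of_bound hmeas.aestronglyMeasurable ‖c‖
    (Filter.Eventually.of_forall fun u => ?_)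
  rw [norm_mul, Complex.norm_conj, norm_walsh1, one_mul]

theorem walshCoeff_zero {x : ℝ} (hx : 0 ≤ x) : walshCoeff b 0 x = x := by
  simp [walshCoeff, walsh1, hx]

theorem natFloor_eq_iff_mem_Ico [NeZero b] {M m : ℕ} {u y : ℝ} (hu : 0 ≤ u)
    (hm : (b : ℝ) ^ M * y = m) :
    ⌊(b : ℝ) ^ M * u⌋₊ = m ↔ u ∈ Set.Ico y (y + ((b : ℝ) ^ M)⁻¹) := by
  have hbM : (0 : ℝ) < (b : ℝ) ^ M := by have := NeZero.pos b; positivity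
  have hnext : (b : ℝ) ^ M * (y + ((b : ℝ) ^ M)⁻¹) = (b : ℝ) ^ M * y + 1 := by field_simp
  rw [Nat.floor_eq_iff (by positivity), Set.mem_Ico, ← hm, ← hnext,
    mul_le_mul_iff_of_pos_left hbM, mul_lt_mul_iff_of_pos_left hbM]

/-- `hsep`: `x` lies outside the level-`M` `b`-adic interval `[y, y + b^{-M})`, the support of
the Dirichlet kernel at `y`. -/
theorem sum_walshCoeff_mul_walsh1 [Fact b.Prime] {M m : ℕ} {x y : ℝ} (hx1 : x ≤ 1)
    (hy0 : 0 ≤ y) (hy1 : y < 1) (hm : (b : ℝ) ^ M * y = m)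
    (hsep : x ≤ y ∨ y + ((b : ℝ) ^ M)⁻¹ ≤ x) :
    ∑ η ∈ range (b ^ M), walshCoeff b η x * walsh1 b η y = if y < x then 1 else 0 := by
  have hbM : (0 : ℝ) < (b : ℝ) ^ M := by have := NeZero.pos b; positivity
  have hkernel : Set.EqOn
      (fun u => ∑ η ∈ range (b ^ M), starRingEnd ℂ (walsh1 b η u) * walsh1 b η y)
      ((Set.Ico y (y + ((b : ℝ) ^ M)⁻¹)).indicator fun _ => (b : ℂ) ^ M) (Set.Ico 0 x) := by
    rintro u ⟨hu0, hux⟩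
    rw [Set.indicator_apply]
    dsimp only
    rw [sum_conj_walsh1_mul_walsh1 M hu0 (hux.trans_le hx1) hy0 hy1, hm, Nat.floor_natCast]
    exact if_congr (natFloor_eq_iff_mem_Ico hu0 hm) rfl rfl
  calc ∑ η ∈ range (b ^ M), walshCoeff b η x * walsh1 b η y
      = ∫ u in Set.Ico 0 x, ∑ η ∈ range (b ^ M), starRingEnd ℂ (walsh1 b η u) * walsh1 b η y := by
        rw [integral_finsetSum _ fun η _ => integrableOn_conj_walsh1_mul η _ x]
        simp only [walshCoeff, integral_mul_const]
    _ = volume.real (Set.Ico 0 x ∩ Set.Ico y (y + ((b : ℝ) ^ M)⁻¹)) • (b : ℂ) ^ M := by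
        rw [setIntegral_congr_fun measurableSet_Ico hkernel,
          setIntegral_indicator measurableSet_Ico, setIntegral_const]
    _ = if y < x then 1 else 0 := by
        rw [Set.Ico_inter_Ico, Real.volume_real_Ico, max_eq_right hy0]
        rcases hsep with hxy | hxy
        · rw [if_neg (not_lt.mpr hxy),
            max_eq_right (by linarith [min_le_left x (y + ((b : ℝ) ^ M)⁻¹)]), zero_smul]
        · have hpos : (0 : ℝ) < ((b : ℝ) ^ M)⁻¹ := inv_pos.mpr hbM
          rw [if_pos (by linarith), min_eq_right hxy, add_sub_cancel_left, max_eq_left hpos.le,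
            Complex.real_smul]
          push_cast
          exact inv_mul_cancel₀ (by exact_mod_cast hbM.ne')

end WalshCoefficients

section DigitFraction

variable {b s : ℕ}

def digitFraction (b : ℕ) {s : ℕ} (c : Fin s → ZMod b) : ℝ :=
  ∑ k : Fin s, ((c k).val : ℝ) * ((b : ℝ) ^ ((k : ℕ) + 1))⁻¹

theorem digitalPoint_eq_digitFraction {n d : ℕ} (Cm : Fin d → Matrix (Fin s) (Fin n) (ZMod b))
    (ν : ℕ) (i : Fin d) : digitalPoint Cm ν i = digitFraction b (Cm i *ᵥ dualDigitVec b n ν) :=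
  rfl

theorem digitFraction_nonneg (c : Fin s → ZMod b) : 0 ≤ digitFraction b c := by
  unfold digitFraction
  positivity

variable [NeZero b]

theorem pow_mul_digitFraction (c : Fin s → ZMod b) :
    (b : ℝ) ^ s * digitFraction b c = ((digitEquiv b s).symm (c ∘ Fin.rev) : ℕ) := by
  have hb : (b : ℝ) ≠ 0 := Nat.cast_ne_zero.mpr (NeZero.ne b)
  rw [val_digitEquiv_symm, digitFraction, Finset.mul_sum]
  push_cast
  refine Fintype.sum_equiv Fin.revPerm _ _ fun k => ?_
  have hpow : (b : ℝ) ^ s = (b : ℝ) ^ ((k : ℕ) + 1) * (b : ℝ) ^ (Fin.rev k : ℕ) := by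
    rw [← pow_add, Fin.val_rev]; congr 1; omega
  simp only [Fin.revPerm_apply, Function.comp_apply, Fin.rev_rev, hpow]
  field_simp

theorem digitFraction_lt_one (c : Fin s → ZMod b) : digitFraction b c < 1 := by
  have hbs : (0 : ℝ) < (b : ℝ) ^ s := by have := NeZero.pos b; positivity
  have hlt : (((digitEquiv b s).symm (c ∘ Fin.rev) : ℕ) : ℝ) < (b : ℝ) ^ s := by
    exact_mod_cast ((digitEquiv b s).symm (c ∘ Fin.rev)).isLt
  rw [← pow_mul_digitFraction] at hlt
  nlinarith

theorem pow_mul_digitFraction_of_le {M : ℕ} (hM : s ≤ M) (c : Fin s → ZMod b) :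
    (b : ℝ) ^ M * digitFraction b c
      = (b ^ (M - s) * (digitEquiv b s).symm (c ∘ Fin.rev) : ℕ) := by
  rw [Nat.cast_mul, ← pow_mul_digitFraction, Nat.cast_pow, ← mul_assoc, ← pow_add,
    Nat.sub_add_cancel hM]

theorem realDigitVec_digitFraction (c : Fin s → ZMod b) :
    realDigitVec b s (digitFraction b c) = c := by
  rw [realDigitVec_eq_comp_rev, pow_mul_digitFraction, Nat.floor_natCast, ← digitEquiv_apply,
    Equiv.apply_symm_apply]
  funext k
  simp

theorem natFloor_pow_mul_digitFraction_eq_zero {a : ℕ} (ha : s ≤ a) (c : Fin s → ZMod b) :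
    ((⌊(b : ℝ) ^ (a + 1) * digitFraction b c⌋₊ : ℕ) : ZMod b) = 0 := by
  rw [pow_mul_digitFraction_of_le (by omega), Nat.floor_natCast, Nat.cast_mul, Nat.cast_pow,
    ZMod.natCast_self, zero_pow (by omega), zero_mul]

theorem walsh1_digitFraction [Fact (1 < b)] (τ : ℕ) (c : Fin s → ZMod b) :
    walsh1 b τ (digitFraction b c) = ZMod.stdAddChar (dualDigitVec b s τ ⬝ᵥ c) := by
  rw [walsh1_eq_stdAddChar_dotProduct (digitFraction_nonneg c)
    fun a ha => by rw [natFloor_pow_mul_digitFraction_eq_zero ha, mul_zero],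
    realDigitVec_digitFraction]

end DigitFraction

section DigitalNet

variable {b n s d : ℕ}

theorem inDual_zero (Cm : Fin d → Matrix (Fin s) (Fin n) (ZMod b)) : InDual Cm 0 := by
  have h0 : dualDigitVec b s 0 = 0 := by
    funext k
    simp [dualDigitVec]
  simp [InDual, h0]

theorem sum_prod_walsh1_digitalNet [Fact b.Prime] (Cm : Fin d → Matrix (Fin s) (Fin n) (ZMod b))
    (t : Fin d → ℕ) :
    ∑ ν : Fin (b ^ n), ∏ i, walsh1 b (t i) (digitalNet Cm ν i)
      = if InDual Cm t then (b : ℂ) ^ n else 0 := by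
  set v := ∑ i, (Cm i)ᵀ *ᵥ dualDigitVec b s (t i)
  have hν (ν : Fin (b ^ n)) :
      ∏ i, walsh1 b (t i) (digitalNet Cm ν i) = ZMod.stdAddChar (v ⬝ᵥ digitEquiv b n ν) := by
    simp only [digitalNet, digitalPoint_eq_digitFraction, walsh1_digitFraction,
      ← AddChar.map_sum_eq_prod, digitEquiv_apply, v, sum_dotProduct, dotProduct_mulVec,
      mulVec_transpose]
  rw [Finset.sum_congr rfl fun ν _ => hν ν,
    (digitEquiv b n).sum_comp fun w => ZMod.stdAddChar (v ⬝ᵥ w),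
    ZMod.sum_stdAddChar_dotProduct, Fintype.card_fin]
  exact if_congr Iff.rfl rfl rfl

theorem sum_inDual_prod_walshCoeff_eq [Fact b.Prime]
    (Cm : Fin d → Matrix (Fin s) (Fin n) (ZMod b)) {x : Fin d → ℝ} (hx : x ∈ unitCube d)
    {M : ℕ} (hsM : s ≤ M)
    (hsep : ∀ ν i, x i ≤ digitalNet Cm ν i ∨ digitalNet Cm ν i + ((b : ℝ) ^ M)⁻¹ ≤ x i) :
    ∑ t ∈ (Fintype.piFinset fun _ : Fin d => range (b ^ M)).filter (InDual Cm),
        ∏ i, walshCoeff b (t i) (x i)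
      = (#{ν | digitalNet Cm ν ∈ Set.univ.pi fun i => Set.Ico 0 (x i)} : ℂ) / (b : ℂ) ^ n := by
  have hK (ν : Fin (b ^ n)) (i : Fin d) :
      ∑ η ∈ range (b ^ M), walshCoeff b η (x i) * walsh1 b η (digitalNet Cm ν i)
        = if digitalNet Cm ν i < x i then 1 else 0 :=
    sum_walshCoeff_mul_walsh1 (hx i trivial).2.le (digitFraction_nonneg _)
      (digitFraction_lt_one _) (pow_mul_digitFraction_of_le hsM _) (hsep ν i)
  have hmem (ν : Fin (b ^ n)) :
      digitalNet Cm ν ∈ Set.univ.pi (fun i => Set.Ico 0 (x i)) ↔ ∀ i, digitalNet Cm ν i < x i := by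
    simp [digitalNet, digitalPoint_eq_digitFraction, digitFraction_nonneg]
  rw [eq_div_iff (pow_ne_zero _ (Nat.cast_ne_zero.mpr (NeZero.ne b))), Finset.sum_filter,
    Finset.sum_mul]
  calc ∑ t ∈ Fintype.piFinset (fun _ => range (b ^ M)),
        (if InDual Cm t then ∏ i, walshCoeff b (t i) (x i) else 0) * (b : ℂ) ^ n
      = ∑ t ∈ Fintype.piFinset (fun _ => range (b ^ M)), ∑ ν : Fin (b ^ n),
          ∏ i, walshCoeff b (t i) (x i) * walsh1 b (t i) (digitalNet Cm ν i) := by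
        refine Finset.sum_congr rfl fun t _ => ?_
        rw [ite_mul, zero_mul, ← mul_ite_zero, ← sum_prod_walsh1_digitalNet, Finset.mul_sum]
        simp_rw [Finset.prod_mul_distrib]
    _ = ∑ ν : Fin (b ^ n), ∏ i, if digitalNet Cm ν i < x i then 1 else 0 := by
        rw [Finset.sum_comm]
        simp_rw [← hK, Finset.prod_univ_sum]
    _ = _ := by
        simp only [Finset.prod_boole, Finset.mem_univ, true_implies, hmem, Finset.sum_boole]

end DigitalNet

theorem eventually_le_or_add_inv_pow_le {b : ℕ} (hb : 1 < b) (x y : ℝ) :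
    ∀ᶠ M : ℕ in Filter.atTop, x ≤ y ∨ y + ((b : ℝ) ^ M)⁻¹ ≤ x := by
  rcases le_or_gt x y with hxy | hxy
  · exact Filter.Eventually.of_forall fun _ => Or.inl hxy
  · have hlim : Filter.Tendsto (fun M : ℕ => ((b : ℝ) ^ M)⁻¹) Filter.atTop (nhds 0) :=
      tendsto_inv_atTop_zero.comp (tendsto_pow_atTop_atTop_of_one_lt (by exact_mod_cast hb))
    exact (hlim.eventually_lt_const (sub_pos.mpr hxy)).mono fun M hM => Or.inr (by linarith)

end DigitalNets

open DigitalNets in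
theorem discrepancy_walsh_series_general (b n d s : ℕ) (hb : b.Prime)
    (Cm : Fin d → Matrix (Fin s) (Fin n) (ZMod b))
    (x : Fin d → ℝ) (hx : x ∈ unitCube d) :
    Filter.Tendsto (fun M : ℕ =>
        ∑ t ∈ (Fintype.piFinset fun _ : Fin d => Finset.range (b ^ M)).filter
            (fun t => InDual Cm t ∧ t ≠ 0),
          ∏ i, walshCoeff b (t i) (x i))
      Filter.atTop
      (nhds ((discrepancy d (b ^ n) (digitalNet Cm) x : ℂ))) := by
  have : Fact b.Prime := ⟨hb⟩
  have hsep : ∀ᶠ M in Filter.atTop, s ≤ M ∧ ∀ ν i,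
      x i ≤ digitalNet Cm ν i ∨ digitalNet Cm ν i + ((b : ℝ) ^ M)⁻¹ ≤ x i :=
    (Filter.eventually_ge_atTop s).and <| Filter.eventually_all.mpr fun ν =>
      Filter.eventually_all.mpr fun i => eventually_le_or_add_inv_pow_le hb.one_lt _ _
  refine tendsto_const_nhds.congr' (hsep.mono fun M ⟨hsM, hsepM⟩ => ?_)
  have h0 : (0 : Fin d → ℕ) ∈
      (Fintype.piFinset fun _ : Fin d => range (b ^ M)).filter (InDual Cm) :=
    Finset.mem_filter.mpr ⟨by simp [Fintype.mem_piFinset, NeZero.pos], inDual_zero Cm⟩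
  dsimp only
  rw [← Finset.filter_filter, Finset.filter_ne', Finset.sum_erase_eq_sub h0,
    sum_inDual_prod_walshCoeff_eq Cm hx hsM hsepM]
  simp [discrepancy, walshCoeff_zero (hx _ trivial).1]

open DigitalNets in
/-- Lemma 4.5: Walsh series representation of the discrepancy function of a
digital net: `D_P(x) = Σ_{t ∈ 𝒟(C₁,…,C_d) \ {0}} χ̂_{[0,x)}(t)`, as a limit of partial sums over
`t` with all coordinates `< b^M`. -/
theorem discrepancy_walsh_series (b n d s : ℕ) (hb : b.Prime) (hn : 1 ≤ n) (hd : 1 ≤ d)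
    (hs : n ≤ s) (Cm : Fin d → Matrix (Fin s) (Fin n) (ZMod b))
    (x : Fin d → ℝ) (hx : x ∈ unitCube d) :
    Filter.Tendsto (fun M : ℕ =>
        ∑ t ∈ (Fintype.piFinset fun _ : Fin d => Finset.range (b ^ M)).filter
            (fun t => InDual Cm t ∧ t ≠ 0),
          ∏ i, walshCoeff b (t i) (x i))
      Filter.atTop
      (nhds ((discrepancy d (b ^ n) (digitalNet Cm) x : ℂ))) :=
  discrepancy_walsh_series_general b n d s hb Cm x hx
end
end

section
/- Fix an integer b ≥ 2 and a dimension d ≥ 1, and let f(x) = x₁·x₂·⋯·x_d for x = (x₁,…,x_d) ∈ [0,1)^d. There exists a constant C = C(b,d) > 0 such that for all j ∈ ℕ₋₁^d, m ∈ 𝔻_j and l ∈ 𝔹_j, the b-adic Haar coefficient satisfies |⟨f, h_{j,m,l}⟩| ≤ C · b^{−2|j|₊}. -/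
open MeasureTheory Finset
open scoped BigOperators Classical

noncomputable section

/-! The inner product factorises over the coordinates, so it suffices to bound the one-dimensional
coefficients `∫₀¹ t · conj h_{j,m,l}(t) dt`, and `C = 1` works. For `j = -1` the coefficient is at
most `1`. For `j ≥ 0` the Haar function equals `ζ^k` on the `k`-th subinterval `I_{j,m}^k`, where
`ζ = e^{2πil/b} ≠ 1` is a `b`-th root of unity, and the integral of `t` over `I_{j,m}^k` is
`b^{-2(j+1)} (b m + 1/2 + k)`. Since `∑ₖ conj ζ^k = 0`, the part independent of `k` cancels and
what remains, `b^{-2(j+1)} ∑ₖ k conj ζ^k`, has norm at most `b^{-2(j+1)} b² = b^{-2j}`. -/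

namespace DigitalNets

open Set

theorem setIntegral_unitCube_prod {𝕜 : Type*} [RCLike 𝕜] {d : ℕ} (F : Fin d → ℝ → 𝕜) :
    ∫ x in unitCube d, ∏ i, F i (x i) = ∏ i, ∫ t in Ico (0 : ℝ) 1, F i t := by
  rw [unitCube, volume_pi, Measure.restrict_pi_pi, integral_fintype_prod_eq_prod]

theorem innerCube_prod_haar {b d : ℕ} (f : Fin d → ℝ → ℂ) (j : Fin d → ℤ) (m l : Fin d → ℕ) :
    innerCube d (fun x => ∏ i, f i (x i)) (haar b d j m l)
      = ∏ i, ∫ t in Ico (0 : ℝ) 1, f i t * starRingEnd ℂ (haar1 b (j i) (m i) (l i) t) := by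
  rw [← setIntegral_unitCube_prod]
  simp only [innerCube, haar, map_prod, ← prod_mul_distrib]

theorem norm_setIntegral_mul_conj_haar1_neg_one_le (b m l : ℕ) :
    ‖∫ t in Ico (0 : ℝ) 1, (t : ℂ) * starRingEnd ℂ (haar1 b (-1) m l t)‖ ≤ 1 := by
  have hle : ∀ t ∈ Ico (0 : ℝ) 1, ‖(t : ℂ) * starRingEnd ℂ (haar1 b (-1) m l t)‖ ≤ 1 := by
    intro t ht
    rw [haar1, if_pos rfl, if_pos ht, map_one, mul_one, Complex.norm_real, Real.norm_of_nonneg ht.1]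
    exact ht.2.le
  simpa using norm_setIntegral_le_of_norm_le_const (measure_Ico_lt_top (μ := volume)) hle

/-- `I_{j,m}^k = [haarNode b j m k, haarNode b j m (k + 1))`, hence
`I_{j,m} = [haarNode b j m 0, haarNode b j m b)`. -/
def haarNode (b j m k : ℕ) : ℝ := ((b * m + k : ℕ) : ℝ) / (b : ℝ) ^ (j + 1)

section HaarNode

variable {b : ℕ} (j m : ℕ)

theorem haarNode_mono : Monotone (haarNode b j m) := fun k k' hkk' => by
  unfold haarNode
  gcongr

variable {j m}

theorem haarNode_zero (hb : b ≠ 0) : haarNode b j m 0 = (b : ℝ) ^ (-(j : ℤ)) * m := by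
  rw [haarNode, zpow_neg, zpow_natCast, pow_succ]
  push_cast
  field_simp
  ring

theorem haarNode_self (hb : b ≠ 0) : haarNode b j m b = (b : ℝ) ^ (-(j : ℤ)) * (m + 1) := by
  rw [haarNode, zpow_neg, zpow_natCast, pow_succ]
  push_cast
  field_simp

theorem Ico_haarNode_subset_Ico_zero_one (hb : b ≠ 0) (hm : m < b ^ j) :
    Ico (haarNode b j m 0) (haarNode b j m b) ⊆ Ico 0 1 := by
  rw [haarNode_zero hb, haarNode_self hb, zpow_neg, zpow_natCast, ← div_eq_inv_mul,
    ← div_eq_inv_mul]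
  have hm' : (m : ℝ) + 1 ≤ (b : ℝ) ^ j := by exact_mod_cast hm
  exact Ico_subset_Ico (by positivity) ((div_le_one (by positivity)).2 hm')

end HaarNode

section HaarValues

variable {b j m : ℕ} (l : ℕ) {x : ℝ}

theorem haar1_natCast_of_notMem (hb : b ≠ 0) (hx : x ∉ Ico (haarNode b j m 0) (haarNode b j m b)) :
    haar1 b j m l x = 0 := by
  rw [haarNode_zero hb, haarNode_self hb] at hx
  rw [haar1, if_neg (by omega), if_neg hx]

theorem haar1_natCast_of_mem {k : ℕ} (hk : k < b)
    (hx : x ∈ Ico (haarNode b j m k) (haarNode b j m (k + 1))) :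
    haar1 b j m l x = (Complex.exp (2 * Real.pi * Complex.I / b) ^ l) ^ k := by
  have hb : b ≠ 0 := by omega
  have hx_big : x ∈ Ico (haarNode b j m 0) (haarNode b j m b) :=
    Ico_subset_Ico (haarNode_mono j m k.zero_le) (haarNode_mono j m hk) hx
  rw [haarNode_zero hb, haarNode_self hb] at hx_big
  have hfloor : ⌊(b : ℝ) ^ ((j : ℤ) + 1) * x⌋ = b * m + k := by
    have hB : (0 : ℝ) < (b : ℝ) ^ (j + 1) := by positivity
    obtain ⟨hlo, hhi⟩ := hx
    rw [haarNode, div_le_iff₀ hB] at hlo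
    rw [haarNode, lt_div_iff₀ hB] at hhi
    rw [Int.floor_eq_iff, show (j : ℤ) + 1 = ((j + 1 : ℕ) : ℤ) by push_cast; ring, zpow_natCast]
    push_cast at hlo hhi ⊢
    constructor <;> linarith
  have hdigit : ⌊(b : ℝ) ^ ((j : ℤ) + 1) * x⌋ % (b : ℤ) = k := by
    rw [hfloor, Int.mul_add_emod_self_left,
      Int.emod_eq_of_lt (by positivity) (by exact_mod_cast hk)]
  rw [haar1, if_neg (by omega), if_pos hx_big, hdigit, ← pow_mul, ← Complex.exp_nat_mul]
  congr 1
  push_cast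
  ring

end HaarValues

theorem integral_Ico_ofReal_id {a a' : ℝ} (h : a ≤ a') :
    ∫ t in Ico a a', (t : ℂ) = (((a' ^ 2 - a ^ 2) / 2 : ℝ) : ℂ) := by
  rw [integral_Ico_eq_integral_Ioo, ← integral_Ioc_eq_integral_Ioo,
    ← intervalIntegral.integral_of_le h, intervalIntegral.integral_ofReal, integral_id]

theorem setIntegral_mul_conj_haar1_eq {b j m : ℕ} (l : ℕ) (hb : b ≠ 0) (hm : m < b ^ j) :
    ∫ t in Ico (0 : ℝ) 1, (t : ℂ) * starRingEnd ℂ (haar1 b j m l t)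
      = ∑ k ∈ range b, (((haarNode b j m (k + 1) ^ 2 - haarNode b j m k ^ 2) / 2 : ℝ) : ℂ)
          * starRingEnd ℂ (Complex.exp (2 * Real.pi * Complex.I / b) ^ l) ^ k := by
  have hmono := haarNode_mono (b := b) j m
  have hunion : Ico (haarNode b j m 0) (haarNode b j m b)
      = ⋃ k ∈ range b, Ico (haarNode b j m k) (haarNode b j m (k + 1)) :=
    (Ico_subset_biUnion_Ico b _).antisymm <| iUnion₂_subset fun k hk =>
      Ico_subset_Ico (hmono k.zero_le) (hmono (mem_range.1 hk))
  have hdisj : (Finset.range b : Set ℕ).Pairwise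
      (Function.onFun Disjoint fun k => Ico (haarNode b j m k) (haarNode b j m (k + 1))) :=
    hmono.pairwise_disjoint_on_Ico_succ.set_pairwise _
  have hpiece : ∀ k ∈ range b, EqOn (fun t : ℝ => (t : ℂ) * starRingEnd ℂ (haar1 b j m l t))
      (fun t => (t : ℂ) * starRingEnd ℂ (Complex.exp (2 * Real.pi * Complex.I / b) ^ l) ^ k)
      (Ico (haarNode b j m k) (haarNode b j m (k + 1))) := fun k hk t ht => by
    simp only [haar1_natCast_of_mem l (mem_range.1 hk) ht, map_pow]
  rw [setIntegral_eq_of_subset_of_forall_sdiff_eq_zero measurableSet_Ico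
      (Ico_haarNode_subset_Ico_zero_one hb hm)
      (fun t ht => by rw [haar1_natCast_of_notMem l hb ht.2, map_zero, mul_zero]),
    hunion, integral_biUnion_finset _ (fun _ _ => measurableSet_Ico) hdisj fun k hk =>
      ((Complex.continuous_ofReal.mul continuous_const).integrableOn_Icc.mono_set
        Ico_subset_Icc_self).congr_fun (hpiece k hk).symm measurableSet_Ico]
  refine sum_congr rfl fun k hk => ?_
  rw [setIntegral_congr_fun measurableSet_Ico (hpiece k hk), integral_mul_const,
    integral_Ico_ofReal_id (hmono k.le_succ)]

theorem geom_sum_eq_zero_of_pow_eq_one {K : Type*} [Field K] {ζ : K} {n : ℕ} (h1 : ζ ≠ 1)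
    (hn : ζ ^ n = 1) : ∑ k ∈ range n, ζ ^ k = 0 := by
  rw [geom_sum_eq h1, hn, sub_self, zero_div]

theorem norm_setIntegral_mul_conj_haar1_le {b j m l : ℕ} (hm : m < b ^ j) (hl : 1 ≤ l)
    (hlb : l < b) :
    ‖∫ t in Ico (0 : ℝ) 1, (t : ℂ) * starRingEnd ℂ (haar1 b j m l t)‖ ≤ ((b : ℝ) ^ (2 * j))⁻¹ := by
  have hb : b ≠ 0 := by omega
  have hω := Complex.isPrimitiveRoot_exp b hb
  set η := starRingEnd ℂ (Complex.exp (2 * Real.pi * Complex.I / b) ^ l) with hη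
  have hη_norm : ‖η‖ = 1 := by rw [hη, RCLike.norm_conj, norm_pow, hω.norm'_eq_one hb, one_pow]
  have hη_sum : ∑ k ∈ range b, η ^ k = 0 := by
    refine geom_sum_eq_zero_of_pow_eq_one ?_ ?_
    · rw [hη, Ne, map_eq_one_iff _ (RingHom.injective _)]
      exact hω.pow_ne_one_of_pos_of_lt (by omega) hlb
    · rw [hη, ← map_pow, ← pow_mul, mul_comm l b, pow_mul, hω.pow_eq_one, one_pow, map_one]
  set c : ℝ := ((b : ℝ) ^ (j + 1))⁻¹ with hc
  have hnode : ∀ k : ℕ, (haarNode b j m (k + 1) ^ 2 - haarNode b j m k ^ 2) / 2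
      = c ^ 2 * (b * m + 1 / 2) + c ^ 2 * k := by
    intro k
    simp only [haarNode, hc]
    push_cast
    field_simp
    ring
  rw [setIntegral_mul_conj_haar1_eq l hb hm, ← hη]
  simp only [hnode, Complex.ofReal_add, add_mul, sum_add_distrib, ← mul_sum, hη_sum, mul_zero,
    zero_add]
  calc ‖∑ k ∈ range b, ((c ^ 2 * k : ℝ) : ℂ) * η ^ k‖
      ≤ ∑ k ∈ range b, ‖((c ^ 2 * k : ℝ) : ℂ) * η ^ k‖ := norm_sum_le _ _
    _ = ∑ k ∈ range b, c ^ 2 * k := by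
        refine sum_congr rfl fun k _ => ?_
        rw [norm_mul, norm_pow, hη_norm, one_pow, mul_one, Complex.norm_real,
          Real.norm_of_nonneg (by positivity)]
    _ ≤ ∑ _k ∈ range b, c ^ 2 * b := by
        gcongr with k hk
        exact_mod_cast (mem_range.1 hk).le
    _ = ((b : ℝ) ^ (2 * j))⁻¹ := by
        rw [sum_const, card_range, nsmul_eq_mul, hc, pow_succ]
        field_simp
        ring

theorem norm_setIntegral_mul_conj_haar1_level_le {b jr m l : ℕ} (hm : m < b ^ (jr - 1))
    (hl : if jr = 0 then l = 1 else 1 ≤ l ∧ l < b) :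
    ‖∫ t in Ico (0 : ℝ) 1, (t : ℂ) * starRingEnd ℂ (haar1 b ((jr : ℤ) - 1) m l t)‖
      ≤ ((b : ℝ) ^ (2 * (jr - 1)))⁻¹ := by
  rcases Nat.eq_zero_or_pos jr with rfl | hjr
  · simpa using norm_setIntegral_mul_conj_haar1_neg_one_le b m l
  · rw [if_neg hjr.ne'] at hl
    rw [show (jr : ℤ) - 1 = ((jr - 1 : ℕ) : ℤ) by omega]
    exact norm_setIntegral_mul_conj_haar1_le hm hl.1 hl.2

end DigitalNets

open DigitalNets in
theorem haarCoeff_prod_le_general (b d : ℕ) :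
    ∃ C : ℝ, 0 < C ∧ ∀ (jr : Fin d → ℕ) (m : (i : Fin d) → Fin (b ^ (jr i - 1)))
      (l : Fin d → ℕ), validL b jr l →
      ‖innerCube d (fun x => ∏ i, (x i : ℂ))
          (haar b d (level jr) (fun i => (m i : ℕ)) l)‖
        ≤ C * ((b : ℝ) ^ (2 * levelSum jr))⁻¹ := by
  refine ⟨1, one_pos, fun jr m l hl => ?_⟩
  rw [innerCube_prod_haar (fun _ t => (t : ℂ)), norm_prod, one_mul, levelSum, mul_sum,
    ← prod_pow_eq_pow_sum, ← prod_inv_distrib]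
  exact prod_le_prod (fun _ _ => norm_nonneg _) fun i _ =>
    norm_setIntegral_mul_conj_haar1_level_le (m i).isLt (hl i)

open DigitalNets in
/-- Lemma 5.3: the `b`-adic Haar coefficients of
`f(x) = x₁⋯x_d` satisfy `|⟨f,h_{j,m,l}⟩| ≤ C b^{−2|j|₊}`. -/
theorem haarCoeff_prod_le (b d : ℕ) (hb : 2 ≤ b) (hd : 1 ≤ d) :
    ∃ C : ℝ, 0 < C ∧ ∀ (jr : Fin d → ℕ) (m : (i : Fin d) → Fin (b ^ (jr i - 1)))
      (l : Fin d → ℕ), validL b jr l →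
      ‖innerCube d (fun x => ∏ i, (x i : ℂ))
          (haar b d (level jr) (fun i => (m i : ℕ)) l)‖
        ≤ C * ((b : ℝ) ^ (2 * levelSum jr))⁻¹ :=
  haarCoeff_prod_le_general b d
end
end

section
/- Let b be a prime, let n,d ≥ 1, 0 ≤ v ≤ n and s ≥ n be integers, and let C₁,…,C_d ∈ 𝔽_b^{s×n} generate an order 1 digital (v,n,d)-net over 𝔽_b. Let λ₁,…,λ_d ∈ ℕ₀ with λ_i ≤ s for all i, and let γ₁,…,γ_d ≥ 1 be integers. Let ω denote the number of t = (t₁,…,t_d) ∈ 𝒟(C₁,…,C_d) such that ρ₁(t_i) = γ_i for all 1 ≤ i ≤ d and, for each i, either γ_i ≤ λ_i or ρ₁(t_i′) = λ_i. Then ω ≤ (b−1)^d · b^{(min(λ₁,γ₁−1) + … + min(λ_d,γ_d−1) − n + v)₊}, where a₊ = max(a,0). -/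
open MeasureTheory Finset
open scoped BigOperators Classical

noncomputable section

/-!
Put `mᵢ = min(λᵢ, γᵢ − 1)`. A counted `tᵢ` is `τᵢ b^(γᵢ−1) + uᵢ` with leading digit
`τᵢ ∈ {1,…,b−1}` and `uᵢ < b^mᵢ` (when `γᵢ > λᵢ`, because `ρ₁(tᵢ′) = λᵢ`). Two counted `t` with
the same leading digits differ only in their low digits, and these differences lie in the kernel
of `u ↦ Σᵢ Σ_{k<mᵢ} u_{i,k} c_{i,k}`. The net property makes `min(Σ mᵢ, n − v)` of these rows
linearly independent, so that kernel has at most `b^(Σ mᵢ − n + v)₊` elements, and there are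
`(b−1)^d` choices of leading digits.
-/

open scoped Matrix

theorem exists_le_sum_eq {ι : Type*} [Fintype ι] (m : ι → ℕ) :
    ∀ r ≤ ∑ i, m i, ∃ η ≤ m, ∑ i, η i = r := by
  intro r
  induction r with
  | zero => exact fun _ => ⟨0, fun _ => Nat.zero_le _, by simp⟩
  | succ r ih =>
    intro hr
    obtain ⟨η, hηm, hηr⟩ := ih (by omega)
    obtain ⟨i, -, hi⟩ := Finset.exists_lt_of_sum_lt (s := Finset.univ) (f := η) (g := m) (by omega)
    refine ⟨η + Pi.single i 1, fun j => ?_, ?_⟩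
    · rcases eq_or_ne j i with rfl | hji
      · simpa using hi
      · simpa [hji] using hηm j
    · simp [Finset.sum_add_distrib, hηr]

theorem card_le_pow_finrank_sub_finrank_range {K V W α : Type*} [Field K] [Fintype K]
    [AddCommGroup V] [Module K V] [FiniteDimensional K V] [AddCommGroup W] [Module K W]
    (L : V →ₗ[K] W) (s : Finset α) (f : α → V) (hf : Set.InjOn f s)
    (hL : ∀ x ∈ s, ∀ y ∈ s, L (f x) = L (f y)) :
    s.card ≤ Fintype.card K ^ (Module.finrank K V - Module.finrank K (LinearMap.range L)) := by
  rcases s.eq_empty_or_nonempty with rfl | ⟨x₀, hx₀⟩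
  · simp
  have : Finite V := Module.finite_of_finite K
  let g : s → LinearMap.ker L := fun y =>
    ⟨f y - f x₀, by simp [LinearMap.mem_ker, hL y y.2 x₀ hx₀]⟩
  have hg : Function.Injective g := fun y y' h =>
    Subtype.ext (hf y.2 y'.2 (sub_left_injective (congrArg Subtype.val h)))
  calc s.card = Nat.card s := (Nat.card_eq_finsetCard s).symm
    _ ≤ Nat.card (LinearMap.ker L) := Nat.card_le_card_of_injective g hg
    _ = Fintype.card K ^ (Module.finrank K V - Module.finrank K (LinearMap.range L)) := by
      rw [Module.natCard_eq_pow_finrank (K := K), Nat.card_eq_fintype_card,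
        ← LinearMap.finrank_range_add_finrank_ker L, Nat.add_sub_cancel_left]

theorem vecMul_eq_vecMul_submatrix_castLE {R : Type*} [CommSemiring R] {m s n : ℕ} (h : m ≤ s)
    (C : Matrix (Fin s) (Fin n) R) (x : Fin s → R) (hx : ∀ k : Fin s, m ≤ k → x k = 0) :
    x ᵥ* C = (x ∘ Fin.castLE h) ᵥ* C.submatrix (Fin.castLE h) id := by
  ext j
  simp only [Matrix.vecMul, dotProduct, Function.comp_apply, Matrix.submatrix_apply, id]
  calc ∑ k, x k * C k j = ∑ k ∈ Finset.univ.map (Fin.castLEEmb h), x k * C k j := by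
        refine (Finset.sum_subset (Finset.subset_univ _) fun k _ hk => ?_).symm
        have hmk : m ≤ k := by
          by_contra! hkm
          exact hk (Finset.mem_map.2 ⟨⟨k, hkm⟩, Finset.mem_univ _, rfl⟩)
        simp [hx k hmk]
    _ = _ := Finset.sum_map _ _ _

namespace DigitalNets

section Digits

variable {b : ℕ}

lemma weight_one_zero : weight b 1 0 = 0 := by
  simp [weight, digitPositions]

lemma weight_one_eq_of_isGreatest {x g : ℕ} (h : IsGreatest (digitPositions b x) g) :
    weight b 1 x = g := by
  rw [weight, Finset.sum_eq_single_of_mem g h.1]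
  · simp only [Finset.card_eq_zero.2 (Finset.filter_false_of_mem fun a ha => (h.2 ha).not_gt),
      Nat.lt_one_iff, if_true]
  · intro a ha hag
    have hgt : g ∈ (digitPositions b x).filter (a < ·) :=
      Finset.mem_filter.2 ⟨h.1, lt_of_le_of_ne (h.2 ha) hag⟩
    rw [if_neg (Nat.one_le_iff_ne_zero.2 (Finset.card_pos.2 ⟨g, hgt⟩).ne').not_gt]

lemma div_pow_mem_Ioo {x g : ℕ} (hb : 0 < b) (hlo : b ^ g ≤ x) (hhi : x < b ^ (g + 1)) :
    x / b ^ g ∈ Finset.Ioo 0 b := by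
  have hpos : 0 < b ^ g := Nat.pow_pos hb
  refine Finset.mem_Ioo.2 ⟨Nat.div_pos hlo hpos, ?_⟩
  exact (Nat.div_lt_iff_lt_mul hpos).2 (by rwa [← pow_succ'])

lemma isGreatest_digitPositions (hb : 1 < b) {x : ℕ} (hx : x ≠ 0) :
    IsGreatest (digitPositions b x) (Nat.log b x + 1) := by
  have hhi := Nat.lt_pow_succ_log_self hb x
  refine ⟨?_, fun a ha => ?_⟩
  · have hdig := Finset.mem_Ioo.1 (div_pow_mem_Ioo (by omega) (Nat.pow_log_le_self b hx) hhi)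
    rw [Finset.mem_coe, digitPositions, Finset.mem_filter, Finset.mem_range, Nat.add_sub_cancel,
      Nat.mod_eq_of_lt hdig.2]
    exact ⟨by have := Nat.log_lt_self b hx; omega, by omega, by omega⟩
  · rw [Finset.mem_coe, digitPositions, Finset.mem_filter, Finset.mem_range] at ha
    by_contra! hlt
    have : x / b ^ (a - 1) = 0 :=
      Nat.div_eq_of_lt (hhi.trans_le (Nat.pow_le_pow_right (by omega) (by omega)))
    simp [this] at ha

lemma weight_one_eq_log_add_one (hb : 1 < b) {x : ℕ} (hx : x ≠ 0) :
    weight b 1 x = Nat.log b x + 1 :=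
  weight_one_eq_of_isGreatest (isGreatest_digitPositions hb hx)

lemma lt_pow_weight_one (hb : 1 < b) (x : ℕ) : x < b ^ weight b 1 x := by
  rcases eq_or_ne x 0 with rfl | hx
  · simp [weight_one_zero]
  · rw [weight_one_eq_log_add_one hb hx]
    exact Nat.lt_pow_succ_log_self hb x

lemma div_pow_mem_Ioo_of_weight_one_eq (hb : 1 < b) {x γ : ℕ} (hγ : 1 ≤ γ)
    (h : weight b 1 x = γ) : x / b ^ (γ - 1) ∈ Finset.Ioo 0 b := by
  have hx : x ≠ 0 := by rintro rfl; rw [weight_one_zero] at h; omega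
  rw [weight_one_eq_log_add_one hb hx] at h
  rw [← h, Nat.add_sub_cancel]
  exact div_pow_mem_Ioo (by omega) (Nat.pow_log_le_self b hx) (Nat.lt_pow_succ_log_self hb x)

lemma mod_lt_pow_min_of_weight_one (hb : 1 < b) {x γ l : ℕ} (h : weight b 1 x = γ)
    (hl : γ ≤ l ∨ weight b 1 (trunc b x) = l) : x % b ^ (γ - 1) < b ^ min l (γ - 1) := by
  have hmod : x % b ^ (γ - 1) < b ^ (γ - 1) := Nat.mod_lt _ (Nat.pow_pos (by omega))
  rcases hl with hl | hl
  · rwa [min_eq_right (by omega)]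
  · have htrunc := lt_pow_weight_one hb (trunc b x)
    rw [hl, trunc, h] at htrunc
    rcases le_total l (γ - 1) with hle | hle
    · rwa [min_eq_left hle]
    · rwa [min_eq_right hle]

lemma div_pow_eq_mul_of_mod_lt {x m g : ℕ} (hmg : m ≤ g) (h : x % b ^ g < b ^ m) :
    x / b ^ m = x / b ^ g * b ^ (g - m) := by
  have hsplit : b ^ g = b ^ m * b ^ (g - m) := by rw [← pow_add, Nat.add_sub_cancel' hmg]
  have hlow : x / b ^ m % b ^ (g - m) = 0 := by
    rw [← Nat.mod_mul_right_div_self, ← hsplit, Nat.div_eq_of_lt h]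
  have := Nat.div_add_mod (x / b ^ m) (b ^ (g - m))
  rw [hlow, Nat.div_div_eq_div_mul, ← hsplit] at this
  linarith

lemma div_pow_mod_eq_of_div_pow_eq {x y m k : ℕ} (h : x / b ^ m = y / b ^ m) (hmk : m ≤ k) :
    x / b ^ k % b = y / b ^ k % b := by
  have hk : b ^ k = b ^ m * b ^ (k - m) := by rw [← pow_add, Nat.add_sub_cancel' hmk]
  rw [hk, ← Nat.div_div_eq_div_mul, ← Nat.div_div_eq_div_mul, h]

lemma mod_pow_eq_of_dualDigitVec_eq {x y m : ℕ} (h : dualDigitVec b m x = dualDigitVec b m y) :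
    x % b ^ m = y % b ^ m := by
  induction m with
  | zero => simp [Nat.mod_one]
  | succ m ih =>
    have hdig := congrFun h (Fin.last m)
    simp only [dualDigitVec, Fin.val_last, ZMod.natCast_eq_natCast_iff', Nat.mod_mod] at hdig
    rw [Nat.mod_pow_succ, Nat.mod_pow_succ, hdig, ih (funext fun k => congrFun h k.castSucc)]

end Digits

section LowRows

variable {R : Type*} [CommRing R] {n s d : ℕ} (Cm : Fin d → Matrix (Fin s) (Fin n) R)
  (m : Fin d → ℕ) (hms : ∀ i, m i ≤ s)

def lowRowsMap : ((i : Fin d) → Fin (m i) → R) →ₗ[R] (Fin n → R) :=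
  ∑ i, Matrix.vecMulLinear ((Cm i).submatrix (Fin.castLE (hms i)) id) ∘ₗ LinearMap.proj i

lemma lowRowsMap_apply (u : (i : Fin d) → Fin (m i) → R) :
    lowRowsMap Cm m hms u = ∑ i, u i ᵥ* (Cm i).submatrix (Fin.castLE (hms i)) id := by
  simp [lowRowsMap]

lemma lowRowsMap_single (i : Fin d) (k : Fin (m i)) :
    lowRowsMap Cm m hms (Pi.single i (Pi.single k 1)) = Cm i (Fin.castLE (hms i) k) := by
  rw [lowRowsMap_apply, Finset.sum_eq_single i (fun j _ hji => by simp [hji]) (by simp)]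
  ext j
  simp

end LowRows

variable {b n s d v : ℕ} (Cm : Fin d → Matrix (Fin s) (Fin n) (ZMod b)) (m : Fin d → ℕ)

lemma lowRowsMap_dualDigitVec_eq (hms : ∀ i, m i ≤ s) {t t' : Fin d → ℕ} (ht : InDual Cm t)
    (ht' : InDual Cm t') (h : ∀ i, t i / b ^ m i = t' i / b ^ m i) :
    lowRowsMap Cm m hms (fun i => dualDigitVec b (m i) (t i)) =
      lowRowsMap Cm m hms (fun i => dualDigitVec b (m i) (t' i)) := by
  have hi : ∀ i, (dualDigitVec b (m i) (t i) - dualDigitVec b (m i) (t' i)) ᵥ*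
      (Cm i).submatrix (Fin.castLE (hms i)) id =
      (dualDigitVec b s (t i) - dualDigitVec b s (t' i)) ᵥ* Cm i := by
    intro i
    refine (vecMul_eq_vecMul_submatrix_castLE (hms i) (Cm i)
      (dualDigitVec b s (t i) - dualDigitVec b s (t' i)) fun k hk => ?_).symm
    simp [dualDigitVec, div_pow_mod_eq_of_div_pow_eq (h i) hk]
  unfold InDual at ht ht'
  simp only [Matrix.mulVec_transpose] at ht ht'
  rw [← sub_eq_zero, ← map_sub, lowRowsMap_apply]
  simp only [Pi.sub_apply, hi, Matrix.sub_vecMul, Finset.sum_sub_distrib, ht, ht', sub_zero]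

lemma min_le_finrank_range_lowRowsMap [Fact b.Prime] (hms : ∀ i, m i ≤ s)
    (hnet : IsOrderDigitalNet b 1 n d s v Cm) :
    min (∑ i, m i) (n - v) ≤ Module.finrank (ZMod b) (LinearMap.range (lowRowsMap Cm m hms)) := by
  -- Keep `min(Σ mᵢ, n − v)` of the rows, at most `mᵢ` from block `i`: for `σ = 1` only the first
  -- row of each block is weighed, and it weighs `1`.
  obtain ⟨η, hηm, hηr⟩ := exists_le_sum_eq m _ (min_le_left _ (n - v))
  let rows : (i : Fin d) → Fin (η i) → Fin s := fun i => Fin.castLE ((hηm i).trans (hms i))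
  have hrows : (∑ i, ∑ k : Fin (η i), if (k : ℕ) < 1 then (rows i k : ℕ) + 1 else 0) ≤
      1 * n - v := by
    calc _ ≤ ∑ i, ∑ _k : Fin (η i), 1 := by
          gcongr with i _ k
          split_ifs with hk
          · simp [rows]; omega
          · exact Nat.zero_le _
      _ ≤ 1 * n - v := by simp [hηr]
  have hli := hnet η rows (fun i => Fin.strictMono_castLE _) hrows
  calc min (∑ i, m i) (n - v) = Fintype.card ((i : Fin d) × Fin (η i)) := by simp [hηr]
    _ = _ := (finrank_span_eq_card hli).symm
    _ ≤ _ := Submodule.finrank_mono <| Submodule.span_le.2 <| by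
      rintro _ ⟨p, rfl⟩
      exact ⟨Pi.single p.1 (Pi.single (Fin.castLE (hηm p.1) p.2) 1), lowRowsMap_single ..⟩

theorem card_le_of_div_pow_eq [Fact b.Prime] (hms : ∀ i, m i ≤ s)
    (hnet : IsOrderDigitalNet b 1 n d s v Cm)
    (S : Finset (Fin d → ℕ)) (hS : ∀ t ∈ S, InDual Cm t)
    (hdiv : ∀ t ∈ S, ∀ t' ∈ S, ∀ i, t i / b ^ m i = t' i / b ^ m i) :
    S.card ≤ b ^ (∑ i, m i + v - n) := by
  have hcard := card_le_pow_finrank_sub_finrank_range (lowRowsMap Cm m hms) S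
    (fun t i => dualDigitVec b (m i) (t i))
    (fun t ht t' ht' h => funext fun i => by
      rw [← Nat.div_add_mod (t i) (b ^ m i), ← Nat.div_add_mod (t' i) (b ^ m i),
        hdiv t ht t' ht' i, mod_pow_eq_of_dualDigitVec_eq (congrFun h i)])
    (fun t ht t' ht' => lowRowsMap_dualDigitVec_eq Cm m hms (hS t ht) (hS t' ht')
      (hdiv t ht t' ht'))
  have hrank := min_le_finrank_range_lowRowsMap Cm m hms hnet
  rw [ZMod.card, Module.finrank_pi_fintype] at hcard
  simp only [Module.finrank_fin_fun] at hcard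
  exact hcard.trans (Nat.pow_le_pow_right (Fact.out : b.Prime).pos (by omega))

end DigitalNets

open DigitalNets in
theorem dual_count_le_general (b n d s v : ℕ) (hb : b.Prime)
    (Cm : Fin d → Matrix (Fin s) (Fin n) (ZMod b))
    (hnet : IsOrderDigitalNet b 1 n d s v Cm)
    (lam γ : Fin d → ℕ) (hlam : ∀ i, lam i ≤ s) (hγ : ∀ i, 1 ≤ γ i) :
    ((Fintype.piFinset fun i : Fin d => Finset.range (b ^ γ i)).filter fun t =>
        InDual Cm t ∧ ∀ i, weight b 1 (t i) = γ i ∧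
          (γ i ≤ lam i ∨ weight b 1 (trunc b (t i)) = lam i)).card
      ≤ (b - 1) ^ d * b ^ (∑ i, min (lam i) (γ i - 1) + v - n) := by
  have : Fact b.Prime := ⟨hb⟩
  set S := (Fintype.piFinset fun i : Fin d => Finset.range (b ^ γ i)).filter fun t =>
    InDual Cm t ∧ ∀ i, weight b 1 (t i) = γ i ∧
      (γ i ≤ lam i ∨ weight b 1 (trunc b (t i)) = lam i)
  set m : Fin d → ℕ := fun i => min (lam i) (γ i - 1)
  let lead : (Fin d → ℕ) → Fin d → ℕ := fun t i => t i / b ^ (γ i - 1)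
  have hS : ∀ t ∈ S, InDual Cm t ∧
      ∀ i, lead t i ∈ Finset.Ioo 0 b ∧ t i % b ^ (γ i - 1) < b ^ m i := by
    intro t ht
    obtain ⟨-, hdual, hw⟩ := Finset.mem_filter.1 ht
    exact ⟨hdual, fun i => ⟨div_pow_mem_Ioo_of_weight_one_eq hb.one_lt (hγ i) (hw i).1,
      mod_lt_pow_min_of_weight_one hb.one_lt (hw i).1 (hw i).2⟩⟩
  have hfiber : ∀ τ ∈ S.image lead, (S.filter (lead · = τ)).card ≤ b ^ (∑ i, m i + v - n) := by
    intro τ _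
    refine card_le_of_div_pow_eq Cm m (fun i => (min_le_left _ _).trans (hlam i)) hnet _
      (fun t ht => (hS t (Finset.mem_filter.1 ht).1).1) fun t ht t' ht' i => ?_
    obtain ⟨htS, rfl⟩ := Finset.mem_filter.1 ht
    obtain ⟨ht'S, hlead⟩ := Finset.mem_filter.1 ht'
    rw [div_pow_eq_mul_of_mod_lt (min_le_right _ _) ((hS t htS).2 i).2,
      div_pow_eq_mul_of_mod_lt (min_le_right _ _) ((hS t' ht'S).2 i).2]
    exact congrArg (· * _) (congrFun hlead i).symm
  have himage : S.image lead ⊆ Fintype.piFinset fun _ => Finset.Ioo 0 b := by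
    intro τ hτ
    obtain ⟨t, ht, rfl⟩ := Finset.mem_image.1 hτ
    exact Fintype.mem_piFinset.2 fun i => ((hS t ht).2 i).1
  calc S.card ≤ b ^ (∑ i, m i + v - n) * (S.image lead).card :=
        Finset.card_le_mul_card_image S _ hfiber
    _ ≤ b ^ (∑ i, m i + v - n) * (b - 1) ^ d := by
        gcongr
        simpa using Finset.card_le_card himage
    _ = _ := mul_comm _ _

open DigitalNets in
/-- Lemma 5.7: counting dual-net vectors: the number `ω` of
`t ∈ 𝒟(C₁,…,C_d)` with `ρ₁(t_i) = γ_i` and (`γ_i ≤ λ_i` or `ρ₁(t_i′) = λ_i`) for all `i`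
satisfies `ω ≤ (b−1)^d b^{(Σᵢ min(λᵢ,γᵢ−1) − n + v)₊}`. -/
theorem dual_count_le (b n d s v : ℕ) (hb : b.Prime) (hn : 1 ≤ n) (hd : 1 ≤ d)
    (hv : v ≤ n) (hs : n ≤ s) (Cm : Fin d → Matrix (Fin s) (Fin n) (ZMod b))
    (hnet : IsOrderDigitalNet b 1 n d s v Cm)
    (lam γ : Fin d → ℕ) (hlam : ∀ i, lam i ≤ s) (hγ : ∀ i, 1 ≤ γ i) :
    ((Fintype.piFinset fun i : Fin d => Finset.range (b ^ γ i)).filter fun t =>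
        InDual Cm t ∧ ∀ i, weight b 1 (t i) = γ i ∧
          (γ i ≤ lam i ∨ weight b 1 (trunc b (t i)) = lam i)).card
      ≤ (b - 1) ^ d * b ^ (∑ i, min (lam i) (γ i - 1) + v - n) :=
  dual_count_le_general b n d s v hb Cm hnet lam γ hlam hγ
end
end
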